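/- Every polynomial in one variable with natural number coefficients can be represented in RSLR as a term of type □U → U operating on unary-encoded natural numbers: for the term p̄ encoding polynomial p, and every i ∈ ℕ, the application of p̄ to the unary encoding of i evaluates with probability 1 to the unary encoding of p(i). -/

import Mathlib

/-- Aspects of RSLR: modal □ (`box`) and non-modal ■ (`bbox`). -/
inductive Aspect | box | bbox
deriving DecidableEq, Repr

/-- Ordering on aspects: □ <: □, □ <: ■, ■ <: ■. -/
inductive AspectSub : Aspect → Aspect → Prop
  | refl (a : Aspect) : AspectSub a a
  | boxLe : AspectSub .box .bbox

/-- RSLR types: A ::= N | aA → A. -/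
inductive Ty
  | N
  | arr (a : Aspect) (A B : Ty)
deriving DecidableEq, Repr

/-- Subtyping on RSLR types. -/
inductive TySub : Ty → Ty → Prop
  | refl (A : Ty) : TySub A A
  | trans {A B C} : TySub A B → TySub B C → TySub A C
  | arr {A B C D : Ty} {a b : Aspect} :
      TySub B A → TySub C D → AspectSub b a → TySub (.arr a A C) (.arr b B D)

mutual
  /-- Positively □-free types. -/
  def posFree : Ty → Prop
    | .N => True
    | .arr .box _ _ => False
    | .arr .bbox A B => negFree A ∧ posFree B
  /-- Negatively □-free types. -/
  def negFree : Ty → Prop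
    | .N => True
    | .arr _ A B => posFree A ∧ negFree B
end

/-- A type is □-free when the modal aspect □ occurs nowhere in it. -/
def tyBoxFree : Ty → Prop
  | .N => True
  | .arr a A B => a = .bbox ∧ tyBoxFree A ∧ tyBoxFree B

/-- Terms of RSLR (with named variables). -/
inductive Term
  | var (x : ℕ)
  | num (n : ℕ)
  | s0 | s1 | pred | rand
  | app (t s : Term)
  | lam (x : ℕ) (a : Aspect) (A : Ty) (t : Term)
  | case_ (A : Ty) (t s r q : Term)
  | rec_ (A : Ty) (t s r : Term)
deriving DecidableEq, Repr

/-- Substitution of `u` for the variable `x` in `t`. -/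
def subst (t : Term) (x : ℕ) (u : Term) : Term :=
  match t with
  | .var y => if y = x then u else .var y
  | .num n => .num n
  | .s0 => .s0
  | .s1 => .s1
  | .pred => .pred
  | .rand => .rand
  | .app a b => .app (subst a x u) (subst b x u)
  | .lam y a A b => if y = x then .lam y a A b else .lam y a A (subst b x u)
  | .case_ A a b c d => .case_ A (subst a x u) (subst b x u) (subst c x u) (subst d x u)
  | .rec_ A a b c => .rec_ A (subst a x u) (subst b x u) (subst c x u)

/-- Free variables of a term. -/
def fv : Term → List ℕ
  | .var x => [x]
  | .app a b => fv a ++ fv b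
  | .lam x _ _ b => (fv b).filter (· ≠ x)
  | .case_ _ a b c d => fv a ++ fv b ++ fv c ++ fv d
  | .rec_ _ a b c => fv a ++ fv b ++ fv c
  | _ => []

def Closed (t : Term) : Prop := fv t = []

/-- Explicit terms contain no recursion. -/
def Explicit : Term → Prop
  | .rec_ _ _ _ _ => False
  | .app a b => Explicit a ∧ Explicit b
  | .lam _ _ _ b => Explicit b
  | .case_ _ a b c d => Explicit a ∧ Explicit b ∧ Explicit c ∧ Explicit d
  | _ => True

/-- Contexts: finite lists of (variable, aspect, type) assignments. -/
abbrev Ctx := List (ℕ × Aspect × Ty)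

/-- All assignments in the context are of base type N. -/
def baseCtx (Γ : Ctx) : Prop := ∀ e ∈ Γ, e.2.2 = Ty.N

/-- Every aspect in the context is below `a` (Γ <: a). -/
def ctxLe (Γ : Ctx) (a : Aspect) : Prop := ∀ e ∈ Γ, AspectSub e.2.1 a

/-- The type ■N → N of the constants S₀, S₁, P. -/
def nmArrNN : Ty := .arr .bbox .N .N

/-- RSLR typing. A judgment `Γ; Δ ⊢ t : A` of the paper (with Γ base-typed)
is rendered as `HasType (Γ ++ Δ) t A` together with `baseCtx Γ` side conditions
where splitting matters. -/
inductive HasType : Ctx → Term → Ty → Prop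
  | var {Γ : Ctx} {x a A} : (x, a, A) ∈ Γ → HasType Γ (.var x) A
  | num {Γ n} : HasType Γ (.num n) .N
  | s0 {Γ} : HasType Γ .s0 nmArrNN
  | s1 {Γ} : HasType Γ .s1 nmArrNN
  | pred {Γ} : HasType Γ .pred nmArrNN
  | rand {Γ} : HasType Γ .rand .N
  | sub {Γ t A B} : HasType Γ t A → TySub A B → HasType Γ t B
  | lam {Γ x a A B t} : HasType ((x, a, A) :: Γ) t B →
      HasType Γ (.lam x a A t) (.arr a A B)
  | case_ {Γ Δ₁ Δ₂ Δ₃ Δ₄ : Ctx} {t s r q A} :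
      baseCtx Γ →
      HasType (Γ ++ Δ₁) t .N →
      HasType (Γ ++ Δ₂) s A →
      HasType (Γ ++ Δ₃) r A →
      HasType (Γ ++ Δ₄) q A →
      tyBoxFree A →
      HasType (Γ ++ Δ₁ ++ Δ₂ ++ Δ₃ ++ Δ₄) (.case_ A t s r q) A
  | rec_ {Γ₁ Γ₂ Δ₁ Δ₂ : Ctx} {t s r A} :
      baseCtx Γ₁ → baseCtx Γ₂ →
      HasType (Γ₁ ++ Δ₁) t .N →
      HasType (Γ₁ ++ Γ₂ ++ Δ₂) s A →
      HasType (Γ₁ ++ Γ₂) r (.arr .box .N (.arr .bbox A A)) →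
      ctxLe (Γ₁ ++ Δ₁) .box →
      tyBoxFree A →
      HasType (Γ₁ ++ Γ₂ ++ Δ₁ ++ Δ₂) (.rec_ A t s r) A
  | app {Γ Δ₁ Δ₂ : Ctx} {t s a A B} :
      baseCtx Γ →
      HasType (Γ ++ Δ₁) t (.arr a A B) →
      HasType (Γ ++ Δ₂) s A →
      ctxLe (Γ ++ Δ₂) a →
      HasType (Γ ++ Δ₁ ++ Δ₂) (.app t s) B

/-- Probabilistic one-step reduction: a term reduces to a sequence of terms,
each with equal probability. -/
inductive Step : Term → List Term → Prop
  | caseZero {A z e o} : Step (.case_ A (.num 0) z e o) [z]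
  | caseEven {A n z e o} : Step (.case_ A (.num (2 * (n + 1))) z e o) [e]
  | caseOdd {A n z e o} : Step (.case_ A (.num (2 * n + 1)) z e o) [o]
  | recZero {A g f} : Step (.rec_ A (.num 0) g f) [g]
  | recSucc {A n g f} : Step (.rec_ A (.num (n + 1)) g f)
      [.app (.app f (.num (n + 1))) (.rec_ A (.num ((n + 1) / 2)) g f)]
  | succ0 {n} : Step (.app .s0 (.num n)) [.num (2 * n)]
  | succ1 {n} : Step (.app .s1 (.num n)) [.num (2 * n + 1)]
  | predStep {n} : Step (.app .pred (.num n)) [.num (n / 2)]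
  | betaN {x a t n} : Step (.app (.lam x a .N t) (.num n)) [subst t x (.num n)]
  | betaH {x a b A B t s} : Step (.app (.lam x a (.arr b A B) t) s) [subst t x s]
  | swap {x a A t s r} :
      Step (.app (.app (.lam x a A t) s) r) [.app (.lam x a A (.app t r)) s]
  | randStep : Step .rand [.num 0, .num 1]
  | appL {t s l} : Step t l → Step (.app t s) (l.map fun t' => .app t' s)
  | appR {t s l} : Step s l → Step (.app t s) (l.map fun s' => .app t s')
  | lamC {x a A t l} : Step t l → Step (.lam x a A t) (l.map fun t' => .lam x a A t')
  | caseT {A t s r q l} : Step t l →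
      Step (.case_ A t s r q) (l.map fun t' => .case_ A t' s r q)
  | caseS {A t s r q l} : Step s l →
      Step (.case_ A t s r q) (l.map fun s' => .case_ A t s' r q)
  | caseR {A t s r q l} : Step r l →
      Step (.case_ A t s r q) (l.map fun r' => .case_ A t s r' q)
  | caseQ {A t s r q l} : Step q l →
      Step (.case_ A t s r q) (l.map fun q' => .case_ A t s r q')
  | recT {A t s r l} : Step t l →
      Step (.rec_ A t s r) (l.map fun t' => .rec_ A t' s r)

def NormalForm (t : Term) : Prop := ∀ l, ¬ Step t l

/-- The Dirac distribution on a term. -/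
noncomputable def dirac (t : Term) : Term → ℝ := fun s => if s = t then 1 else 0

/-- Multistep reduction to a distribution over normal forms. -/
inductive MStep : Term → (Term → ℝ) → Prop
  | nf {t} : NormalForm t → MStep t (dirac t)
  | step {t : Term} {ts : List Term} {Ds : List (Term → ℝ)} :
      Step t ts → ts.length = Ds.length →
      (∀ p ∈ ts.zip Ds, MStep p.1 p.2) →
      MStep t (fun s => ((Ds.map fun D => D s).sum) / (ts.length : ℝ))

/-- The relaxed multistep reduction relation ⇒, indexed by derivation size. -/
inductive MStepR : ℕ → Term → (Term → ℝ) → Prop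
  | ax (t : Term) : MStepR 0 t (dirac t)
  | step {t : Term} {ts : List Term} {Ds : List (Term → ℝ)} {ks : List ℕ} :
      Step t ts → ts.length = Ds.length → Ds.length = ks.length →
      (∀ p ∈ ts.zip (Ds.zip ks), MStepR p.2.2 p.1 p.2.1) →
      MStepR (ks.foldr max 0 + 1) t (fun s => ((Ds.map fun D => D s).sum) / (ts.length : ℝ))

/-- Size of a numeral: ⌈log₂ n⌉, taken to be at least 1. -/
def numSize (n : ℕ) : ℕ := max (Nat.clog 2 n) 1

/-- Size of a term, numerals having logarithmic size. -/
def tsize : Term → ℕ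
  | .var _ => 1
  | .num n => numSize n
  | .s0 => 1 | .s1 => 1 | .pred => 1 | .rand => 1
  | .app a b => tsize a + tsize b
  | .lam _ _ _ b => tsize b + 1
  | .case_ _ a b c d => tsize a + tsize b + tsize c + tsize d + 1
  | .rec_ _ a b c => tsize a + tsize b + tsize c + 1

/-- Size of a term counting every numeral as 1. -/
def wsize : Term → ℕ
  | .var _ => 1
  | .num _ => 1
  | .s0 => 1 | .s1 => 1 | .pred => 1 | .rand => 1
  | .app a b => wsize a + wsize b
  | .lam _ _ _ b => wsize b + 1
  | .case_ _ a b c d => wsize a + wsize b + wsize c + wsize d + 1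
  | .rec_ _ a b c => wsize a + wsize b + wsize c + 1

/-- Maximum size of a numeral occurring in a term (0 if none). -/
def nsize : Term → ℕ
  | .num n => numSize n
  | .app a b => max (nsize a) (nsize b)
  | .lam _ _ _ b => nsize b
  | .case_ _ a b c d => max (max (nsize a) (nsize b)) (max (nsize c) (nsize d))
  | .rec_ _ a b c => max (nsize a) (max (nsize b) (nsize c))
  | _ => 0

/-- Iterated application `t u₁ … u_k`. -/
def appL (t : Term) (us : List Term) : Term := us.foldl Term.app t

def IsConst : Term → Prop := fun c =>
  (∃ n, c = .num n) ∨ c = .s0 ∨ c = .s1 ∨ c = .pred ∨ c = .rand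

/-- Big-step normal-form evaluation ⇓_nf for explicit closed terms of type N,
indexed by probability, result numeral, derivation size, and the list of terms
occurring in the derivation. -/
inductive Nf : Term → ℝ → ℕ → ℕ → List Term → Prop
  | num {n} : Nf (.num n) 1 n 1 [.num n]
  | rand0 : Nf .rand (1/2) 0 1 [.rand]
  | rand1 : Nf .rand (1/2) 1 1 [.rand]
  | succ0 {t α n k l} : Nf t α n k l →
      Nf (.app .s0 t) α (2 * n) (k + 1) (.app .s0 t :: l)
  | succ1 {t α n k l} : Nf t α n k l →
      Nf (.app .s1 t) α (2 * n + 1) (k + 1) (.app .s1 t :: l)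
  | pred0 {t α k l} : Nf t α 0 k l →
      Nf (.app .pred t) α 0 (k + 1) (.app .pred t :: l)
  | predS {t α n k l} : Nf t α n k l → 1 ≤ n →
      Nf (.app .pred t) α (n / 2) (k + 1) (.app .pred t :: l)
  | caseZ {A t s r q us α β m k₁ k₂ l₁ l₂} :
      Nf t α 0 k₁ l₁ → Nf (appL s us) β m k₂ l₂ →
      Nf (appL (.case_ A t s r q) us) (α * β) m (k₁ + k₂ + 1)
        (appL (.case_ A t s r q) us :: l₁ ++ l₂)
  | caseE {A t s r q us α β n m k₁ k₂ l₁ l₂} :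
      Nf t α (2 * n) k₁ l₁ → 1 ≤ n → Nf (appL r us) β m k₂ l₂ →
      Nf (appL (.case_ A t s r q) us) (α * β) m (k₁ + k₂ + 1)
        (appL (.case_ A t s r q) us :: l₁ ++ l₂)
  | caseO {A t s r q us α β n m k₁ k₂ l₁ l₂} :
      Nf t α (2 * n + 1) k₁ l₁ → Nf (appL q us) β m k₂ l₂ →
      Nf (appL (.case_ A t s r q) us) (α * β) m (k₁ + k₂ + 1)
        (appL (.case_ A t s r q) us :: l₁ ++ l₂)
  | betaN {x a t s rs α β n m k₁ k₂ l₁ l₂} :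
      Nf s α n k₁ l₁ → Nf (appL (subst t x (.num n)) rs) β m k₂ l₂ →
      Nf (appL (.app (.lam x a .N t) s) rs) (α * β) m (k₁ + k₂ + 1)
        (appL (.app (.lam x a .N t) s) rs :: l₁ ++ l₂)
  | betaH {x a b A B t s rs β n k l} :
      Nf (appL (subst t x s) rs) β n k l →
      Nf (appL (.app (.lam x a (.arr b A B) t) s) rs) β n (k + 1)
        (appL (.app (.lam x a (.arr b A B) t) s) rs :: l)

/-- Recursion-elimination evaluation ⇓_rf, indexed by probability, result term,
derivation size, and the terms occurring in the derivation. -/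
inductive Rf : Term → ℝ → Term → ℕ → List Term → Prop
  | const {c} : IsConst c → Rf c 1 c 1 [c]
  | succ0 {t α v k l} : Rf t α v k l →
      Rf (.app .s0 t) α (.app .s0 v) (k + 1) (.app .s0 t :: l)
  | succ1 {t α v k l} : Rf t α v k l →
      Rf (.app .s1 t) α (.app .s1 v) (k + 1) (.app .s1 t :: l)
  | predC {t α v k l} : Rf t α v k l →
      Rf (.app .pred t) α (.app .pred v) (k + 1) (.app .pred t :: l)
  | caseC {A t s r q α β γ δ v z a b kt ks kr kq lt ls lr lq}
      {us cs : List Term} {εs : List ℝ} {kus : List ℕ} {lus : List (List Term)} :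
      Rf t α v kt lt → Rf s β z ks ls → Rf r γ a kr lr → Rf q δ b kq lq →
      us.length = εs.length → εs.length = cs.length →
      cs.length = kus.length → kus.length = lus.length →
      (∀ p ∈ us.zip (εs.zip (cs.zip (kus.zip lus))),
        Rf p.1 p.2.1 p.2.2.1 p.2.2.2.1 p.2.2.2.2) →
      Rf (appL (.case_ A t s r q) us) (α * β * γ * δ * εs.prod)
        (appL (.case_ A v z a b) cs) (kt + ks + kr + kq + kus.sum + 1)
        (appL (.case_ A t s r q) us :: lt ++ ls ++ lr ++ lq ++ lus.flatten)
  | recC {A t s r α β γ v z n kt kn ks lt ln ls}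
      {qs bs : List Term} {δs : List ℝ} {kqs : List ℕ} {lqs : List (List Term)}
      {rres : List Term} {γs : List ℝ} {krs : List ℕ} {lrs : List (List Term)} :
      Rf t α v kt lt →
      Nf v β n kn ln →
      Rf s γ z ks ls →
      qs.length = δs.length → δs.length = bs.length →
      bs.length = kqs.length → kqs.length = lqs.length →
      (∀ p ∈ qs.zip (δs.zip (bs.zip (kqs.zip lqs))),
        Rf p.1 p.2.1 p.2.2.1 p.2.2.2.1 p.2.2.2.2) →
      rres.length = Nat.size n → rres.length = γs.length →
      γs.length = krs.length → krs.length = lrs.length →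
      (∀ p ∈ (List.range (Nat.size n)).zip (γs.zip (rres.zip (krs.zip lrs))),
        Rf (.app r (.num (n / 2 ^ p.1))) p.2.1 p.2.2.1 p.2.2.2.1 p.2.2.2.2) →
      Rf (appL (.rec_ A t s r) qs) (α * β * γ * γs.prod * δs.prod)
        (appL (rres.foldr Term.app z) bs) (kt + kn + ks + kqs.sum + krs.sum + 1)
        (appL (.rec_ A t s r) qs :: lt ++ ln ++ ls ++ lqs.flatten ++ lrs.flatten)
  | betaBox {x t s rs α β γ z n u k₁ k₂ k₃ l₁ l₂ l₃} :
      Rf s α z k₁ l₁ → Nf z γ n k₂ l₂ →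
      Rf (appL (subst t x (.num n)) rs) β u k₃ l₃ →
      Rf (appL (.app (.lam x .box .N t) s) rs) (α * γ * β) u (k₁ + k₂ + k₃ + 1)
        (appL (.app (.lam x .box .N t) s) rs :: l₁ ++ l₂ ++ l₃)
  | betaBBox {x t s rs α β γ z n u k₁ k₂ k₃ l₁ l₂ l₃} :
      Rf s α z k₁ l₁ → Nf z γ n k₂ l₂ →
      Rf (appL t rs) β u k₃ l₃ →
      Rf (appL (.app (.lam x .bbox .N t) s) rs) (α * γ * β)
        (.app (.lam x .bbox .N u) (.num n)) (k₁ + k₂ + k₃ + 1)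
        (appL (.app (.lam x .bbox .N t) s) rs :: l₁ ++ l₂ ++ l₃)
  | betaH {x a b A B t s rs β u k l} :
      Rf (appL (subst t x s) rs) β u k l →
      Rf (appL (.app (.lam x a (.arr b A B) t) s) rs) β u (k + 1)
        (appL (.app (.lam x a (.arr b A B) t) s) rs :: l)
  | lamC {x a A t β u k l} :
      Rf t β u k l →
      Rf (.lam x a A t) β (.lam x a A u) (k + 1) (.lam x a A t :: l)
  | varC {x} {ts ss : List Term} {αs : List ℝ} {ks : List ℕ} {ls : List (List Term)} :
      ts.length = αs.length → αs.length = ss.length →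
      ss.length = ks.length → ks.length = ls.length →
      (∀ p ∈ ts.zip (αs.zip (ss.zip (ks.zip ls))),
        Rf p.1 p.2.1 p.2.2.1 p.2.2.2.1 p.2.2.2.2) →
      Rf (appL (.var x) ts) αs.prod (appL (.var x) ss) (ks.sum + 1)
        (appL (.var x) ts :: ls.flatten)

/-- First-order types a₁N → … → a_kN → N. -/
def FOty : ℕ → Ty → Prop
  | 0, .N => True
  | k + 1, .arr _ .N B => FOty k B
  | _, _ => False

/-- First-order terms of a given arity: closed, well-typed terms of
type a₁N → … → a_kN → N. -/
def IsFirstOrder (t : Term) (k : ℕ) : Prop :=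
  Closed t ∧ ∃ A, HasType [] t A ∧ FOty k A

/-- The unary encoding of i : the numeral whose binary representation is 1^i. -/
def unary (i : ℕ) : Term := Term.num (2 ^ i - 1)

/-! The unary numeral of `i` is `2 ^ i - 1`. Recursion on `unary (i + 1)` unfolds in one step to
the step function applied to the recursive call on `unary i`, so `rec` on `unary i` iterates its
step function `i` times. Since `S₁` maps `2 ^ k - 1` to `2 ^ (k + 1) - 1`, iterating `S₁` adds
unary numerals and iterating that addition multiplies them. Polynomials are then built from
constants and the identity with `add` and `mult`; the composite terms stay typable because their
components are closed and typable in every base context of □-variables. -/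

abbrev DetRed : Term → Term → Prop := Relation.ReflTransGen fun t u => Step t [u]

lemma DetRed.app_left {t t' : Term} (s : Term) (h : DetRed t t') :
    DetRed (.app t s) (.app t' s) :=
  Relation.ReflTransGen.lift (p := fun t u => Step t [u]) (Term.app · s)
    (fun _ _ hab => by simpa using Step.appL (s := s) hab) _ _ h

lemma DetRed.app_right {s s' : Term} (t : Term) (h : DetRed s s') :
    DetRed (.app t s) (.app t s') :=
  Relation.ReflTransGen.lift (p := fun t u => Step t [u]) (Term.app t ·)
    (fun _ _ hab => by simpa using Step.appR (t := t) hab) _ _ h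

lemma normalForm_num (n : ℕ) : NormalForm (.num n) := fun _ h => nomatch h

lemma DetRed.mstep_dirac {t u : Term} (h : DetRed t u) (hu : NormalForm u) :
    MStep t (dirac u) := by
  induction h using Relation.ReflTransGen.head_induction_on with
  | refl => exact .nf hu
  | head hstep _ ih => simpa using MStep.step (Ds := [dirac u]) hstep rfl (by simpa using ih)

lemma subst_eq_self_of_not_mem_fv {x : ℕ} (u : Term) :
    ∀ t : Term, x ∉ fv t → subst t x u = t
  | .var y, h => by simp_all [fv, subst, eq_comm]
  | .num _, _ | .s0, _ | .s1, _ | .pred, _ | .rand, _ => rfl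
  | .app a b, h => by
      simp only [fv, List.mem_append, not_or] at h
      simp [subst, subst_eq_self_of_not_mem_fv u a h.1, subst_eq_self_of_not_mem_fv u b h.2]
  | .lam y a A b, h => by
      by_cases hy : y = x
      · simp [subst, hy]
      · have hb : x ∉ fv b := fun hx => h (by simpa [fv, List.mem_filter, hx] using Ne.symm hy)
        simp [subst, hy, subst_eq_self_of_not_mem_fv u b hb]
  | .case_ A a b c d, h => by
      simp only [fv, List.mem_append, not_or] at h
      simp [subst, subst_eq_self_of_not_mem_fv u a h.1.1.1, subst_eq_self_of_not_mem_fv u b h.1.1.2,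
        subst_eq_self_of_not_mem_fv u c h.1.2, subst_eq_self_of_not_mem_fv u d h.2]
  | .rec_ A a b c, h => by
      simp only [fv, List.mem_append, not_or] at h
      simp [subst, subst_eq_self_of_not_mem_fv u a h.1.1, subst_eq_self_of_not_mem_fv u b h.1.2,
        subst_eq_self_of_not_mem_fv u c h.2]

lemma Closed.subst_eq {t : Term} (h : Closed t) (x : ℕ) (u : Term) : subst t x u = t :=
  subst_eq_self_of_not_mem_fv u t (by rw [show fv t = [] from h]; exact List.not_mem_nil)

lemma iterate_two_mul_add_one_zero (n : ℕ) : (fun v => 2 * v + 1)^[n] 0 = 2 ^ n - 1 := by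
  induction n with
  | zero => rfl
  | succ n ih =>
      rw [Function.iterate_succ_apply', ih, pow_succ]
      have := Nat.one_le_two_pow (n := n)
      omega

lemma step_rec_unary_succ (A : Ty) (g f : Term) (i : ℕ) :
    Step (.rec_ A (unary (i + 1)) g f) [.app (.app f (unary (i + 1))) (.rec_ A (unary i) g f)] := by
  have hpos := Nat.one_le_two_pow (n := i)
  have hsucc : 2 ^ (i + 1) - 1 = (2 ^ (i + 1) - 2) + 1 := by rw [pow_succ]; omega
  have hhalf : (2 ^ (i + 1) - 2 + 1) / 2 = 2 ^ i - 1 := by rw [pow_succ]; omega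
  simpa only [unary, hsucc, hhalf] using
    Step.recSucc (A := A) (n := 2 ^ (i + 1) - 2) (g := g) (f := f)

lemma detRed_rec_unary {A : Ty} {f : Term} {F : ℕ → ℕ}
    (hf : ∀ m v, DetRed (.app (.app f (.num m)) (.num v)) (.num (F v))) (c : ℕ) :
    ∀ i, DetRed (.rec_ A (unary i) (.num c) f) (.num (F^[i] c))
  | 0 => .single .recZero
  | i + 1 => .head (step_rec_unary_succ A _ f i) <|
      (DetRed.app_right _ (detRed_rec_unary hf c i)).trans <| by
        rw [Function.iterate_succ_apply']; exact hf _ _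

lemma detRed_beta₂ {x y : ℕ} (hxy : y ≠ x) (a b : Aspect) (t : Term) (m n : ℕ) :
    DetRed (.app (.app (.lam x a .N (.lam y b .N t)) (.num m)) (.num n))
      (subst (subst t x (.num m)) y (.num n)) := by
  have hβ : Step (.app (.lam x a .N (.lam y b .N t)) (.num m))
      [.lam y b .N (subst t x (.num m))] := by
    simpa [subst, hxy] using Step.betaN (x := x) (a := a) (t := .lam y b .N t) (n := m)
  exact .head (by simpa using Step.appL (s := .num n) hβ) (.single .betaN)

def succStep : Term := .lam 0 .box .N (.lam 1 .bbox .N (.app .s1 (.var 1)))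

def addTerm : Term := .lam 3 .box .N (.lam 0 .box .N (.rec_ .N (.var 0) (.var 3) succStep))

def mulStep (x : Term) : Term := .lam 2 .box .N (.lam 1 .bbox .N (.rec_ .N x (.var 1) succStep))

def mulTerm : Term :=
  .lam 3 .box .N (.lam 0 .box .N (.rec_ .N (.var 0) (.num 0) (mulStep (.var 3))))

lemma succStep_closed : Closed succStep := rfl

lemma detRed_succStep (m v : ℕ) :
    DetRed (.app (.app succStep (.num m)) (.num v)) (.num (2 * v + 1)) := by
  have hβ := detRed_beta₂ (x := 0) (y := 1) (by decide) .box .bbox (.app .s1 (.var 1)) m v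
  simp only [subst, one_ne_zero, ↓reduceIte] at hβ
  exact hβ.tail .succ1

lemma detRed_mulStep (j k v : ℕ) :
    DetRed (.app (.app (mulStep (unary j)) (.num k)) (.num v))
      (.num ((fun v => 2 * v + 1)^[j] v)) := by
  have hβ := detRed_beta₂ (x := 2) (y := 1) (by decide) .box .bbox
    (.rec_ .N (unary j) (.var 1) succStep) k v
  simp only [unary, subst, OfNat.one_ne_ofNat, ↓reduceIte, succStep_closed.subst_eq] at hβ
  exact hβ.trans (detRed_rec_unary detRed_succStep v j)

lemma detRed_addTerm (a b : ℕ) :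
    DetRed (.app (.app addTerm (unary a)) (unary b)) (unary (a + b)) := by
  have hβ := detRed_beta₂ (x := 3) (y := 0) (by decide) .box .box
    (.rec_ .N (.var 0) (.var 3) succStep) (2 ^ a - 1) (2 ^ b - 1)
  simp only [subst, OfNat.zero_ne_ofNat, ↓reduceIte, succStep_closed.subst_eq] at hβ
  have hsum : (fun v => 2 * v + 1)^[b] (2 ^ a - 1) = 2 ^ (a + b) - 1 := by
    rw [← iterate_two_mul_add_one_zero a, ← Function.iterate_add_apply,
      iterate_two_mul_add_one_zero, add_comm]
  have hrec := detRed_rec_unary (A := .N) detRed_succStep (2 ^ a - 1) b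
  rw [hsum] at hrec
  exact hβ.trans hrec

lemma detRed_mulTerm (a b : ℕ) :
    DetRed (.app (.app mulTerm (unary a)) (unary b)) (unary (a * b)) := by
  have hβ := detRed_beta₂ (x := 3) (y := 0) (by decide) .box .box
    (.rec_ .N (.var 0) (.num 0) (mulStep (.var 3))) (2 ^ a - 1) (2 ^ b - 1)
  simp only [mulStep, subst, OfNat.zero_ne_ofNat, ↓reduceIte, Nat.reduceEqDiff,
    OfNat.one_ne_ofNat, succStep_closed.subst_eq, OfNat.ofNat_ne_zero, one_ne_zero] at hβ
  have hrec := detRed_rec_unary (A := .N) (detRed_mulStep a) 0 b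
  rw [← Function.iterate_mul, iterate_two_mul_add_one_zero] at hrec
  exact hβ.trans hrec

lemma baseCtx_nil : baseCtx [] := fun _ h => nomatch h

lemma baseCtx_cons {x : ℕ} {a : Aspect} {Γ : Ctx} (h : baseCtx Γ) :
    baseCtx ((x, a, .N) :: Γ) := by
  rintro e (_ | ⟨_, he⟩)
  exacts [rfl, h e he]

lemma ctxLe_cons_box {x : ℕ} {Γ : Ctx} (h : ctxLe Γ .box) :
    ctxLe ((x, .box, .N) :: Γ) .box := by
  rintro e (_ | ⟨_, he⟩)
  exacts [.refl _, h e he]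

lemma ctxLe_bbox (Γ : Ctx) : ctxLe Γ .bbox
  | ⟨_, .box, _⟩, _ => .boxLe
  | ⟨_, .bbox, _⟩, _ => .refl _

lemma HasType.app_of_baseCtx {Γ : Ctx} {t s : Term} {a : Aspect} {A B : Ty} (hb : baseCtx Γ)
    (ht : HasType Γ t (.arr a A B)) (hs : HasType Γ s A) (hle : ctxLe Γ a) :
    HasType Γ (.app t s) B := by
  simpa using HasType.app (Δ₁ := []) (Δ₂ := []) hb (by simpa using ht) (by simpa using hs)
    (by simpa using hle)

lemma hasType_succStep (Γ : Ctx) : HasType Γ succStep (.arr .box .N (.arr .bbox .N .N)) :=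
  .lam <| .lam <| HasType.app (Γ := []) (Δ₁ := []) baseCtx_nil HasType.s1
    (.var (a := .bbox) List.mem_cons_self) (ctxLe_bbox _)

lemma hasType_mulStep_var {Γ₀ Γ : Ctx} (x : ℕ) (h₀ : baseCtx Γ₀) :
    HasType (Γ₀ ++ (x, .box, .N) :: Γ) (mulStep (.var x))
      (.arr .box .N (.arr .bbox .N .N)) := by
  refine .lam <| .lam ?_
  have hrec := HasType.rec_ (Γ₁ := []) (Γ₂ := (1, .bbox, .N) :: (2, .box, .N) :: Γ₀)
    (Δ₁ := [(x, .box, .N)]) (Δ₂ := Γ) (A := .N) (s := .var 1) baseCtx_nil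
    (baseCtx_cons (baseCtx_cons h₀)) (.var (a := .box) List.mem_cons_self)
    (.var (a := .bbox) List.mem_cons_self) (hasType_succStep _)
    (by simpa [ctxLe] using AspectSub.refl .box) trivial
  simpa using hrec

lemma hasType_lam_lam_rec {Γ : Ctx} {s r : Term}
    (hs : HasType ([(0, .box, .N), (3, .box, .N)] ++ Γ) s .N)
    (hr : HasType [(0, .box, .N), (3, .box, .N)] r (.arr .box .N (.arr .bbox .N .N))) :
    HasType Γ (.lam 3 .box .N (.lam 0 .box .N (.rec_ .N (.var 0) s r)))
      (.arr .box .N (.arr .box .N .N)) := by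
  refine .lam <| .lam ?_
  have hrec := HasType.rec_ (Γ₁ := [(0, .box, .N), (3, .box, .N)]) (Γ₂ := []) (Δ₁ := [])
    (Δ₂ := Γ) (A := .N) (baseCtx_cons (baseCtx_cons baseCtx_nil)) baseCtx_nil
    (by simpa using HasType.var (a := .box) List.mem_cons_self) (by simpa using hs)
    (by simpa using hr) (by simpa [ctxLe] using AspectSub.refl .box) trivial
  simpa using hrec

lemma hasType_addTerm (Γ : Ctx) : HasType Γ addTerm (.arr .box .N (.arr .box .N .N)) :=
  hasType_lam_lam_rec (.var (a := .box) (by simp)) (hasType_succStep _)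

lemma hasType_mulTerm (Γ : Ctx) : HasType Γ mulTerm (.arr .box .N (.arr .box .N .N)) :=
  hasType_lam_lam_rec .num (hasType_mulStep_var (Γ₀ := [(0, .box, .N)]) 3
    (baseCtx_cons baseCtx_nil))

structure UnaryRep (t : Term) (f : ℕ → ℕ) : Prop where
  closed : Closed t
  hasType : ∀ Γ, baseCtx Γ → ctxLe Γ .box → HasType Γ t (.arr .box .N .N)
  detRed : ∀ i, DetRed (.app t (unary i)) (unary (f i))

structure UnaryRep₂ (t : Term) (f : ℕ → ℕ → ℕ) : Prop where
  closed : Closed t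
  hasType : ∀ Γ, baseCtx Γ → ctxLe Γ .box → HasType Γ t (.arr .box .N (.arr .box .N .N))
  detRed : ∀ i j, DetRed (.app (.app t (unary i)) (unary j)) (unary (f i j))

lemma UnaryRep.const (c : ℕ) : UnaryRep (.lam 0 .box .N (unary c)) fun _ => c where
  closed := rfl
  hasType _ _ _ := .lam .num
  detRed _ := .single .betaN

lemma UnaryRep.id : UnaryRep (.lam 0 .box .N (.var 0)) fun i => i where
  closed := rfl
  hasType _ _ _ := .lam (.var (a := .box) List.mem_cons_self)
  detRed _ := .single .betaN

lemma unaryRep₂_addTerm : UnaryRep₂ addTerm (· + ·) where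
  closed := rfl
  hasType Γ _ _ := hasType_addTerm Γ
  detRed := detRed_addTerm

lemma unaryRep₂_mulTerm : UnaryRep₂ mulTerm (· * ·) where
  closed := rfl
  hasType Γ _ _ := hasType_mulTerm Γ
  detRed := detRed_mulTerm

lemma UnaryRep₂.comp {op tf tg : Term} {h : ℕ → ℕ → ℕ} {f g : ℕ → ℕ}
    (hop : UnaryRep₂ op h) (hf : UnaryRep tf f) (hg : UnaryRep tg g) :
    UnaryRep (.lam 0 .box .N (.app (.app op (.app tf (.var 0))) (.app tg (.var 0))))
      fun i => h (f i) (g i) where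
  closed := by
    have := hop.closed; have := hf.closed; have := hg.closed
    simp_all [Closed, fv]
  hasType Γ hb hbox := by
    have hb' := baseCtx_cons (x := 0) (a := .box) hb
    have hbox' := ctxLe_cons_box (x := 0) hbox
    have hv : HasType ((0, .box, .N) :: Γ) (.var 0) .N := .var (a := .box) List.mem_cons_self
    have hf' := HasType.app_of_baseCtx hb' (hf.hasType _ hb' hbox') hv hbox'
    have hg' := HasType.app_of_baseCtx hb' (hg.hasType _ hb' hbox') hv hbox'
    exact .lam <| .app_of_baseCtx hb' (.app_of_baseCtx hb' (hop.hasType _ hb' hbox') hf' hbox')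
      hg' hbox'
  detRed i := by
    have hβ := Step.betaN (x := 0) (a := .box) (n := 2 ^ i - 1)
      (t := .app (.app op (.app tf (.var 0))) (.app tg (.var 0)))
    simp only [subst, hop.closed.subst_eq, hf.closed.subst_eq, hg.closed.subst_eq,
      ↓reduceIte] at hβ
    exact .head hβ <| ((hf.detRed i).app_right _ |>.app_left _).trans <|
      ((hg.detRed i).app_right _).trans (hop.detRed _ _)

lemma exists_unaryRep_eval (p : Polynomial ℕ) : ∃ t, UnaryRep t fun i => p.eval i := by
  induction p using Polynomial.induction_on with
  | C a => exact ⟨_, by simpa using UnaryRep.const a⟩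
  | add p q hp hq =>
      obtain ⟨tp, htp⟩ := hp
      obtain ⟨tq, htq⟩ := hq
      exact ⟨_, by simpa using unaryRep₂_addTerm.comp htp htq⟩
  | monomial n a ih =>
      obtain ⟨t, ht⟩ := ih
      exact ⟨_, by simpa [pow_succ, mul_assoc] using unaryRep₂_mulTerm.comp ht UnaryRep.id⟩

/-- every polynomial with natural coefficients is representable
in RSLR by a term of type □U → U on unary-encoded naturals: applying it to
the unary encoding of i evaluates with probability 1 (Dirac distribution) to
the unary encoding of p(i). -/
theorem polynomial_representable (p : Polynomial ℕ) :
    ∃ t : Term, HasType [] t (Ty.arr Aspect.box Ty.N Ty.N) ∧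
      ∀ i : ℕ, MStep (Term.app t (unary i)) (dirac (unary (p.eval i))) := by
  obtain ⟨t, ht⟩ := exists_unaryRep_eval p
  exact ⟨t, ht.hasType [] baseCtx_nil (fun _ h => nomatch h),
    fun i => (ht.detRed i).mstep_dirac (normalForm_num _)⟩
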